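/- arXiv:2003.06868 — 2 statements merged into one kernel-verified Lean document; each statement's English description precedes it below -/
import Mathlib

section
/- Let all features be binary and let Ω be the uniform product distribution on {0,1}^n (each feature is 1 independently with probability 1/2). Let L : {0,1}^n → {0,1} be monotone with L(1,…,1) = 1, and let e⋆ = (1,…,1). Then P(L = 1) = 1 − Σ_{i=1}^n SHAP(e⋆, F_i); equivalently, the number of satisfying assignments of L equals 2^n·(1 − Σ_i SHAP(e⋆, F_i)). -/
open Finset

/-- Conditional expectation of `L` given agreement with `eStar` on the features in `S`,
with respect to the probability mass function `w` on entities in `{0,1}^n`. -/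
noncomputable def condExp (n : ℕ) (w L : (Fin n → Bool) → ℝ) (eStar : Fin n → Bool)
    (S : Finset (Fin n)) : ℝ :=
  (∑ e ∈ univ.filter (fun e => ∀ i ∈ S, e i = eStar i), w e * L e) /
  (∑ e ∈ univ.filter (fun e => ∀ i ∈ S, e i = eStar i), w e)

/-- The contribution `c(e⋆, F_i, π)` of feature `i` under the permutation `π`. -/
noncomputable def contrib (n : ℕ) (w L : (Fin n → Bool) → ℝ) (eStar : Fin n → Bool)
    (i : Fin n) (π : Equiv.Perm (Fin n)) : ℝ :=
  condExp n w L eStar (univ.filter fun j => π j ≤ π i) -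
  condExp n w L eStar (univ.filter fun j => π j < π i)

/-- The SHAP score of feature `i`: the average contribution over all permutations. -/
noncomputable def shap (n : ℕ) (w L : (Fin n → Bool) → ℝ) (eStar : Fin n → Bool)
    (i : Fin n) : ℝ :=
  (Nat.factorial n : ℝ)⁻¹ * ∑ π : Equiv.Perm (Fin n), contrib n w L eStar i π

/-!
Shapley values are efficient: for every permutation π the contributions of the features telescope
along the chain of prefixes of π, from the empty set to the full feature set, so the scores sum to
`E[L | e = e⋆] - E[L] = L(e⋆) - E[L]`. With `e⋆ = (1,…,1)` and `L(e⋆) = 1` this is `1 - P(L = 1)`.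
-/

theorem sum_perm_filter_le_sub_filter_lt {n : ℕ} {M : Type*} [AddCommGroup M]
    (f : Finset (Fin n) → M) (π : Equiv.Perm (Fin n)) :
    ∑ i, (f (univ.filter fun j => π j ≤ π i) - f (univ.filter fun j => π j < π i)) =
      f univ - f ∅ := by
  set F : ℕ → M := fun m => f (univ.filter fun j => (π j : ℕ) < m) with hF
  calc ∑ i, (f (univ.filter fun j => π j ≤ π i) - f (univ.filter fun j => π j < π i))
      = ∑ i, (F ((π i : ℕ) + 1) - F (π i : ℕ)) := by
        simp only [hF, Nat.lt_succ_iff, ← Fin.le_def, ← Fin.lt_def]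
    _ = ∑ k : Fin n, (F ((k : ℕ) + 1) - F k) := Equiv.sum_comp π fun k => F (k + 1) - F k
    _ = ∑ m ∈ range n, (F (m + 1) - F m) := Fin.sum_univ_eq_sum_range (fun m => F (m + 1) - F m) n
    _ = F n - F 0 := sum_range_sub F n
    _ = f univ - f ∅ := by simp [hF]

section condExp

variable {n : ℕ} (w L : (Fin n → Bool) → ℝ) (eStar : Fin n → Bool)

theorem sum_contrib_eq_condExp_univ_sub_condExp_empty (π : Equiv.Perm (Fin n)) :
    ∑ i, contrib n w L eStar i π = condExp n w L eStar univ - condExp n w L eStar ∅ :=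
  sum_perm_filter_le_sub_filter_lt (condExp n w L eStar) π

theorem sum_shap_eq_condExp_univ_sub_condExp_empty :
    ∑ i, shap n w L eStar i = condExp n w L eStar univ - condExp n w L eStar ∅ := by
  simp only [shap, ← mul_sum]
  rw [sum_comm]
  simp only [sum_contrib_eq_condExp_univ_sub_condExp_empty, sum_const, card_univ,
    Fintype.card_perm, Fintype.card_fin, nsmul_eq_mul]
  field_simp

theorem condExp_univ {w} (hw : w eStar ≠ 0) : condExp n w L eStar univ = L eStar := by
  have hfilter : univ.filter (fun e : Fin n → Bool => ∀ i ∈ univ, e i = eStar i) = {eStar} := by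
    ext e
    simp [funext_iff]
  rw [condExp, hfilter, sum_singleton, sum_singleton, mul_div_cancel_left₀ _ hw]

theorem condExp_const_empty {c : ℝ} (hc : c ≠ 0) :
    condExp n (fun _ => c) L eStar ∅ = (∑ e, L e) / 2 ^ n := by
  simp only [condExp, notMem_empty, IsEmpty.forall_iff, imp_true_iff, filter_true, ← mul_sum,
    sum_const, card_univ, Fintype.card_fun, Fintype.card_bool, Fintype.card_fin, nsmul_eq_mul]
  push_cast
  field_simp

end condExp

theorem Finset.sum_eq_card_filter_eq_one {α : Type*} [Fintype α] {f : α → ℝ}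
    (hf : ∀ a, f a = 0 ∨ f a = 1) : ∑ a, f a = #(univ.filter fun a => f a = 1) := by
  rw [card_filter, Nat.cast_sum]
  refine sum_congr rfl fun a _ => ?_
  rcases hf a with h | h <;> simp [h]

theorem prob_eq_one_sub_sum_shap_general (n : ℕ) (L : (Fin n → Bool) → ℝ)
    (hL01 : ∀ e, L e = 0 ∨ L e = 1)
    (hLtop : L (fun _ => true) = 1) :
    ((univ.filter (fun e : Fin n → Bool => L e = 1)).card : ℝ) / 2 ^ n =
        1 - ∑ i, shap n (fun _ => ((2 : ℝ) ^ n)⁻¹) L (fun _ => true) i ∧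
      ((univ.filter (fun e : Fin n → Bool => L e = 1)).card : ℝ) =
        2 ^ n * (1 - ∑ i, shap n (fun _ => ((2 : ℝ) ^ n)⁻¹) L (fun _ => true) i) := by
  have hsum : ∑ i, shap n (fun _ => ((2 : ℝ) ^ n)⁻¹) L (fun _ => true) i =
      1 - ((univ.filter (fun e : Fin n → Bool => L e = 1)).card : ℝ) / 2 ^ n := by
    rw [sum_shap_eq_condExp_univ_sub_condExp_empty, condExp_univ _ _ (by positivity), hLtop,
      condExp_const_empty _ _ (by positivity), Finset.sum_eq_card_filter_eq_one hL01]
  refine ⟨by rw [hsum]; ring, by rw [hsum]; field_simp; ring⟩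

/-- Over the uniform product distribution on `{0,1}^n`, for a monotone `{0,1}`-valued
classifier `L` with `L(1,…,1) = 1` and `e⋆ = (1,…,1)`:
`P(L = 1) = 1 − Σ_i SHAP(e⋆, F_i)`; equivalently, the number of satisfying assignments of
`L` equals `2^n·(1 − Σ_i SHAP(e⋆, F_i))`. -/
theorem prob_eq_one_sub_sum_shap (n : ℕ) (L : (Fin n → Bool) → ℝ)
    (hL01 : ∀ e, L e = 0 ∨ L e = 1)
    (hmono : ∀ e e' : Fin n → Bool, (∀ i, e i ≤ e' i) → L e ≤ L e')
    (hLtop : L (fun _ => true) = 1) :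
    ((univ.filter (fun e : Fin n → Bool => L e = 1)).card : ℝ) / 2 ^ n =
        1 - ∑ i, shap n (fun _ => ((2 : ℝ) ^ n)⁻¹) L (fun _ => true) i ∧
      ((univ.filter (fun e : Fin n → Bool => L e = 1)).card : ℝ) =
        2 ^ n * (1 - ∑ i, shap n (fun _ => ((2 : ℝ) ^ n)⁻¹) L (fun _ => true) i) :=
  prob_eq_one_sub_sum_shap_general n L hL01 hLtop
end

section
/- In the Apriori-style optimization for SHAP computation over the empirical distribution: if every entity e ∈ T with e_S = e⋆_S satisfies L(e) = L(e⋆), then for every superset S' ⊇ S (with the conditioning event still nonempty), E[L(e) | e_{S'} = e⋆_{S'}] = L(e⋆), and consequently c'(e⋆, F_i, S') = 0 for every feature F_i ∉ S'. -/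
open Finset

variable {n : ℕ} {D : Fin n → Type} [∀ i, Fintype (D i)] [∀ i, DecidableEq (D i)]

/-- Conditional expectation of `L` over the empirical (uniform) distribution on `T`,
given agreement with `eStar` on the features in `S`. -/
noncomputable def empCondExp (T : Finset (∀ i, D i)) (L : (∀ i, D i) → ℝ)
    (eStar : ∀ i, D i) (S : Finset (Fin n)) : ℝ :=
  (∑ e ∈ T.filter (fun e => ∀ i ∈ S, e i = eStar i), L e) /
  ((T.filter (fun e => ∀ i ∈ S, e i = eStar i)).card : ℝ)

/-- Apriori-style optimization: if every entity of `T` agreeing with `e⋆` on `S` has label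
`L(e⋆)`, then for every superset `S' ⊇ S` with nonempty conditioning event,
`E[L(e) | e_{S'} = e⋆_{S'}] = L(e⋆)`, and consequently `c'(e⋆, F_i, S') = 0` for every
feature `F_i ∉ S'` (assuming the finer conditioning event is nonempty). -/
theorem apriori_pruning (T : Finset (∀ i, D i)) (L : (∀ i, D i) → ℝ)
    (eStar : ∀ i, D i) (S : Finset (Fin n))
    (hS : ∀ e ∈ T, (∀ i ∈ S, e i = eStar i) → L e = L eStar) :
    ∀ S' : Finset (Fin n), S ⊆ S' →
      ((T.filter (fun e => ∀ i ∈ S', e i = eStar i)).Nonempty →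
        empCondExp T L eStar S' = L eStar) ∧
      (∀ i ∉ S',
        (T.filter (fun e => ∀ k ∈ insert i S', e k = eStar k)).Nonempty →
        empCondExp T L eStar (insert i S') - empCondExp T L eStar S' = 0) := by
  have key : ∀ S' : Finset (Fin n), S ⊆ S' →
      (T.filter (fun e => ∀ i ∈ S', e i = eStar i)).Nonempty →
      empCondExp T L eStar S' = L eStar := by
    intro S' hsub hne
    have hval : ∀ e ∈ T.filter (fun e => ∀ i ∈ S', e i = eStar i), L e = L eStar := by
      intro e he
      rw [Finset.mem_filter] at he
      exact hS e he.1 (fun i hi => he.2 i (hsub hi))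
    have hsum : (∑ e ∈ T.filter (fun e => ∀ i ∈ S', e i = eStar i), L e)
        = ((T.filter (fun e => ∀ i ∈ S', e i = eStar i)).card : ℝ) * L eStar := by
      rw [Finset.sum_congr rfl hval, Finset.sum_const, nsmul_eq_mul]
    have hcard : ((T.filter (fun e => ∀ i ∈ S', e i = eStar i)).card : ℝ) ≠ 0 := by
      exact_mod_cast Finset.card_ne_zero_of_mem hne.choose_spec
    rw [empCondExp, hsum, mul_comm, mul_div_assoc, div_self hcard, mul_one]
  intro S' hsub
  refine ⟨key S' hsub, fun i hi hne => ?_⟩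
  have hsub2 : S ⊆ insert i S' := hsub.trans (Finset.subset_insert i S')
  have hne2 : (T.filter (fun e => ∀ k ∈ S', e k = eStar k)).Nonempty := by
    obtain ⟨e, he⟩ := hne
    rw [Finset.mem_filter] at he
    exact ⟨e, Finset.mem_filter.2 ⟨he.1, fun k hk => he.2 k (Finset.mem_insert_of_mem hk)⟩⟩
  rw [key (insert i S') hsub2 hne, key S' hsub hne2, sub_self]
end
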